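/- If 0 < β - α < 1, then the third derivative of ln Q(t) is nonnegative on (0, ∞) and nonpositive on (-∞, 0), where Q(t) = (e^{-αt} - e^{-βt})/(1 - e^{-t}) for t ≠ 0 and Q(0) = β - α (i.e., Q is 3-log-convex on (0,∞) and 3-log-concave on (-∞,0)). -/

import Mathlib

/-!
Write `γ = β - α` and `expDiffQuotient α β` for `Q`. For `t ≠ 0`,
`Q t = exp ((1 - α - β) t / 2) * sinh (γ t / 2) / sinh (t / 2)`
and `(log ∘ sinh)''' = 2 cosh / sinh ^ 3`, so
`(log Q)''' t = 2 (w (γ t / 2) - w (t / 2)) / t ^ 3` with `w y = y ^ 3 cosh y / sinh y ^ 3`.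
The function `w` is even and decreasing on `(0, ∞)`, and `|γ t / 2| < |t / 2|`,
so the numerator is nonnegative and `(log Q)'''` has the sign of `t`.
-/

open Real Set

lemma apply_zero_le_of_hasDerivAt_nonneg {f f' : ℝ → ℝ} (hf : ∀ x, HasDerivAt f (f' x) x)
    (hf' : ∀ x, 0 < x → 0 ≤ f' x) {x : ℝ} (hx : 0 ≤ x) : f 0 ≤ f x := by
  refine monotoneOn_of_hasDerivWithinAt_nonneg (convex_Ici 0)
    (fun y _ ↦ (hf y).continuousAt.continuousWithinAt) (fun y _ ↦ (hf y).hasDerivWithinAt)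
    (fun y hy ↦ hf' y ?_) self_mem_Ici hx hx
  rwa [interior_Ici] at hy

lemma sinh_le_mul_cosh {x : ℝ} (hx : 0 ≤ x) : sinh x ≤ x * cosh x := by
  have hd (y : ℝ) : HasDerivAt (fun y ↦ y * cosh y - sinh y) (y * sinh y) y :=
    (((hasDerivAt_id' y).mul (hasDerivAt_cosh y)).sub (hasDerivAt_sinh y)).congr_deriv (by ring)
  have := apply_zero_le_of_hasDerivAt_nonneg hd
    (fun y hy ↦ mul_nonneg hy.le (sinh_nonneg_iff.2 hy.le)) hx
  simp only [zero_mul, sinh_zero, sub_zero] at this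
  linarith

lemma three_mul_sinh_mul_cosh_add_le {x : ℝ} (hx : 0 ≤ x) :
    3 * sinh x * cosh x + x * sinh x ^ 2 ≤ 3 * x * cosh x ^ 2 := by
  have hd (y : ℝ) :
      HasDerivAt (fun y ↦ 3 * y * cosh y ^ 2 - 3 * sinh y * cosh y - y * sinh y ^ 2)
      (4 * sinh y * (y * cosh y - sinh y)) y := by
    have hc := hasDerivAt_cosh y
    have hs := hasDerivAt_sinh y
    have hi := hasDerivAt_id' y
    exact ((((hi.const_mul 3).mul (hc.fun_pow 2)).sub ((hs.const_mul 3).mul hc)).sub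
      (hi.mul (hs.fun_pow 2))).congr_deriv (by push_cast; ring)
  have := apply_zero_le_of_hasDerivAt_nonneg hd
    (fun y hy ↦ mul_nonneg (by have := sinh_nonneg_iff.2 hy.le; positivity)
      (sub_nonneg.2 (sinh_le_mul_cosh hy.le))) hx
  simp only [mul_zero, zero_mul, sinh_zero, sub_zero, ne_eq, OfNat.ofNat_ne_zero,
    not_false_eq_true, zero_pow] at this
  linarith

noncomputable def cubeCoshDivSinhCube (y : ℝ) : ℝ := y ^ 3 * cosh y / sinh y ^ 3

lemma hasDerivAt_cubeCoshDivSinhCube {y : ℝ} (hy : y ≠ 0) :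
    HasDerivAt cubeCoshDivSinhCube
      (y ^ 2 * (3 * sinh y * cosh y + y * sinh y ^ 2 - 3 * y * cosh y ^ 2) / sinh y ^ 4) y := by
  have hs : sinh y ≠ 0 := sinh_ne_zero.2 hy
  refine ((((hasDerivAt_pow 3 y).fun_mul (hasDerivAt_cosh y)).div ((hasDerivAt_sinh y).fun_pow 3)
    (pow_ne_zero 3 hs))).congr_deriv ?_
  field_simp
  ring

lemma cubeCoshDivSinhCube_neg (y : ℝ) : cubeCoshDivSinhCube (-y) = cubeCoshDivSinhCube y := by
  simp only [cubeCoshDivSinhCube, sinh_neg, cosh_neg, Odd.neg_pow (by decide : Odd 3),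
    neg_div_neg_eq, neg_mul]

lemma cubeCoshDivSinhCube_abs (y : ℝ) : cubeCoshDivSinhCube |y| = cubeCoshDivSinhCube y := by
  rcases abs_choice y with h | h <;> rw [h]
  exact cubeCoshDivSinhCube_neg y

lemma antitoneOn_cubeCoshDivSinhCube : AntitoneOn cubeCoshDivSinhCube (Ioi 0) := by
  refine antitoneOn_of_hasDerivWithinAt_nonpos (convex_Ioi 0)
    (fun y hy ↦ (hasDerivAt_cubeCoshDivSinhCube (ne_of_gt hy)).continuousAt.continuousWithinAt)
    (fun y hy ↦ (hasDerivAt_cubeCoshDivSinhCube (ne_of_gt (interior_subset hy))).hasDerivWithinAt)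
    fun y hy ↦ ?_
  rw [interior_Ioi] at hy
  exact div_nonpos_of_nonpos_of_nonneg
    (mul_nonpos_of_nonneg_of_nonpos (sq_nonneg y)
      (sub_nonpos.2 (three_mul_sinh_mul_cosh_add_le (le_of_lt hy)))) (by positivity)

lemma cubeCoshDivSinhCube_le_of_abs_le {x y : ℝ} (hx : x ≠ 0) (h : |x| ≤ |y|) :
    cubeCoshDivSinhCube y ≤ cubeCoshDivSinhCube x := by
  rw [← cubeCoshDivSinhCube_abs x, ← cubeCoshDivSinhCube_abs y]
  have hx' : 0 < |x| := abs_pos.2 hx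
  exact antitoneOn_cubeCoshDivSinhCube hx' (hx'.trans_le h) h

lemma eqOn_iteratedDeriv_succ_of_hasDerivAt {U : Set ℝ} (hU : IsOpen U) {f f' : ℝ → ℝ}
    (hf : ∀ x ∈ U, HasDerivAt f (f' x) x) (n : ℕ) :
    EqOn (iteratedDeriv (n + 1) f) (iteratedDeriv n f') U := by
  rw [iteratedDeriv_succ']
  exact (deriv_eqOn hU fun x hx ↦ (hf x hx).hasDerivWithinAt).iteratedDeriv_of_isOpen hU n

lemma eqOn_iteratedDeriv_three_of_hasDerivAt {U : Set ℝ} (hU : IsOpen U)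
    {f f₁ f₂ f₃ : ℝ → ℝ} (h₁ : ∀ x ∈ U, HasDerivAt f (f₁ x) x)
    (h₂ : ∀ x ∈ U, HasDerivAt f₁ (f₂ x) x) (h₃ : ∀ x ∈ U, HasDerivAt f₂ (f₃ x) x) :
    EqOn (iteratedDeriv 3 f) f₃ U := fun x hx ↦
  (eqOn_iteratedDeriv_succ_of_hasDerivAt hU h₁ 2 hx).trans <|
    (eqOn_iteratedDeriv_succ_of_hasDerivAt hU h₂ 1 hx).trans <|
      (eqOn_iteratedDeriv_succ_of_hasDerivAt hU h₃ 0 hx).trans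
        (congrFun iteratedDeriv_zero x)

section
variable {c x : ℝ}

lemma hasDerivAt_log_sinh_mul (hx : c * x ≠ 0) :
    HasDerivAt (fun x ↦ log (sinh (c * x))) (c * cosh (c * x) / sinh (c * x)) x :=
  (((hasDerivAt_id' x).const_mul c).sinh.log (sinh_ne_zero.2 hx)).congr_deriv (by ring)

lemma hasDerivAt_mul_cosh_div_sinh_mul (hx : c * x ≠ 0) :
    HasDerivAt (fun x ↦ c * cosh (c * x) / sinh (c * x)) (-(c ^ 2 / sinh (c * x) ^ 2)) x := by
  have h := (hasDerivAt_id' x).const_mul c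
  have hs := sinh_ne_zero.2 hx
  refine ((h.cosh.const_mul c).div h.sinh hs).congr_deriv ?_
  field_simp
  linear_combination (-c ^ 2) * cosh_sq_sub_sinh_sq (c * x)

lemma hasDerivAt_sq_div_sinh_sq_mul (hx : c * x ≠ 0) :
    HasDerivAt (fun x ↦ c ^ 2 / sinh (c * x) ^ 2)
      (-(2 * c ^ 3 * cosh (c * x) / sinh (c * x) ^ 3)) x := by
  have h := (hasDerivAt_id' x).const_mul c
  have hs := sinh_ne_zero.2 hx
  refine ((hasDerivAt_const x (c ^ 2)).div (h.sinh.fun_pow 2) (pow_ne_zero 2 hs)).congr_deriv ?_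
  field_simp
  ring

end

lemma exp_add_sub_exp_sub (m d : ℝ) : exp (m + d) - exp (m - d) = 2 * exp m * sinh d := by
  rw [sinh_eq, exp_add, exp_sub, exp_neg]
  field_simp

noncomputable def expDiffQuotient (α β t : ℝ) : ℝ :=
  if t = 0 then β - α else (exp (-α * t) - exp (-β * t)) / (1 - exp (-t))

lemma log_expDiffQuotient {α β t : ℝ} (hαβ : α ≠ β) (ht : t ≠ 0) :
    log (expDiffQuotient α β t)
      = (1 - α - β) / 2 * t + log (sinh ((β - α) / 2 * t)) - log (sinh (1 / 2 * t)) := by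
  have hc : sinh ((β - α) / 2 * t) ≠ 0 :=
    sinh_ne_zero.2 (mul_ne_zero (by intro h; apply hαβ; linarith) ht)
  have hd : sinh (1 / 2 * t) ≠ 0 := sinh_ne_zero.2 (mul_ne_zero (by norm_num) ht)
  have hnum :
      exp (-α * t) - exp (-β * t) = 2 * exp (-(α + β) / 2 * t) * sinh ((β - α) / 2 * t) := by
    rw [← exp_add_sub_exp_sub]
    ring_nf
  have hden : 1 - exp (-t) = 2 * exp (-1 / 2 * t) * sinh (1 / 2 * t) := by
    conv_lhs => rw [← exp_zero]
    rw [← exp_add_sub_exp_sub]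
    ring_nf
  have hexp : exp ((1 - α - β) / 2 * t) * exp (-1 / 2 * t) = exp (-(α + β) / 2 * t) := by
    rw [← exp_add]
    ring_nf
  have hQ : expDiffQuotient α β t
      = exp ((1 - α - β) / 2 * t) * sinh ((β - α) / 2 * t) / sinh (1 / 2 * t) := by
    rw [expDiffQuotient, if_neg ht, hnum, hden, ← hexp]
    field_simp
  rw [hQ, log_div (mul_ne_zero (exp_ne_zero _) hc) hd, log_mul (exp_ne_zero _) hc, log_exp]

lemma eqOn_iteratedDeriv_three_linear_add_log_sinh_sub_log_sinh {a c d : ℝ} (hc : c ≠ 0)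
    (hd : d ≠ 0) :
    EqOn (iteratedDeriv 3 fun x ↦ a * x + log (sinh (c * x)) - log (sinh (d * x)))
      (fun x ↦ 2 * (cubeCoshDivSinhCube (c * x) - cubeCoshDivSinhCube (d * x)) / x ^ 3)
      {0}ᶜ := by
  have hcd (y : ℝ) (hy : y ∈ ({0}ᶜ : Set ℝ)) : c * y ≠ 0 ∧ d * y ≠ 0 :=
    ⟨mul_ne_zero hc hy, mul_ne_zero hd hy⟩
  have h₁ : ∀ y ∈ ({0}ᶜ : Set ℝ),
      HasDerivAt (fun x ↦ a * x + log (sinh (c * x)) - log (sinh (d * x)))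
      (a + c * cosh (c * y) / sinh (c * y) - d * cosh (d * y) / sinh (d * y)) y := fun y hy ↦
    ((((hasDerivAt_id' y).const_mul a).fun_add (hasDerivAt_log_sinh_mul (hcd y hy).1)).fun_sub
      (hasDerivAt_log_sinh_mul (hcd y hy).2)).congr_deriv (by ring)
  have h₂ : ∀ y ∈ ({0}ᶜ : Set ℝ),
      HasDerivAt (fun x ↦ a + c * cosh (c * x) / sinh (c * x) - d * cosh (d * x) / sinh (d * x))
      (d ^ 2 / sinh (d * y) ^ 2 - c ^ 2 / sinh (c * y) ^ 2) y := fun y hy ↦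
    (((hasDerivAt_mul_cosh_div_sinh_mul (hcd y hy).1).const_add a).fun_sub
      (hasDerivAt_mul_cosh_div_sinh_mul (hcd y hy).2)).congr_deriv (by ring)
  have h₃ : ∀ y ∈ ({0}ᶜ : Set ℝ),
      HasDerivAt (fun x ↦ d ^ 2 / sinh (d * x) ^ 2 - c ^ 2 / sinh (c * x) ^ 2)
      (2 * c ^ 3 * cosh (c * y) / sinh (c * y) ^ 3
        - 2 * d ^ 3 * cosh (d * y) / sinh (d * y) ^ 3) y :=
    fun y hy ↦ ((hasDerivAt_sq_div_sinh_sq_mul (hcd y hy).2).fun_sub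
      (hasDerivAt_sq_div_sinh_sq_mul (hcd y hy).1)).congr_deriv (by ring)
  refine (eqOn_iteratedDeriv_three_of_hasDerivAt isOpen_compl_singleton h₁ h₂ h₃).trans
    fun x (hx : x ≠ 0) ↦ ?_
  simp only [cubeCoshDivSinhCube]
  field_simp

lemma iteratedDeriv_three_log_expDiffQuotient {α β t : ℝ} (hαβ : α ≠ β) (ht : t ≠ 0) :
    iteratedDeriv 3 (fun t ↦ log (expDiffQuotient α β t)) t
      = 2 * (cubeCoshDivSinhCube ((β - α) / 2 * t) - cubeCoshDivSinhCube (1 / 2 * t))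
        / t ^ 3 := by
  have hlog : EqOn (fun t ↦ log (expDiffQuotient α β t))
      (fun t ↦ (1 - α - β) / 2 * t + log (sinh ((β - α) / 2 * t)) - log (sinh (1 / 2 * t)))
      {0}ᶜ :=
    fun t ht ↦ log_expDiffQuotient hαβ ht
  rw [hlog.iteratedDeriv_of_isOpen isOpen_compl_singleton 3 ht]
  exact eqOn_iteratedDeriv_three_linear_add_log_sinh_sub_log_sinh
    (div_ne_zero (sub_ne_zero.2 hαβ.symm) two_ne_zero) (by norm_num) ht

theorem stmt5 (α β : ℝ) (h0 : 0 < β - α) (h1 : β - α < 1) :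
    (∀ t ∈ Set.Ioi (0:ℝ), 0 ≤ iteratedDeriv 3 (fun t => Real.log ((fun t : ℝ => if t = 0 then β - α else (Real.exp (-α*t) - Real.exp (-β*t)) / (1 - Real.exp (-t))) t)) t) ∧
    (∀ t ∈ Set.Iio (0:ℝ), iteratedDeriv 3 (fun t => Real.log ((fun t : ℝ => if t = 0 then β - α else (Real.exp (-α*t) - Real.exp (-β*t)) / (1 - Real.exp (-t))) t)) t ≤ 0) := by
  have hαβ : α ≠ β := (sub_pos.1 h0).ne
  have hmono (t : ℝ) (ht : t ≠ 0) :
      cubeCoshDivSinhCube (1 / 2 * t) ≤ cubeCoshDivSinhCube ((β - α) / 2 * t) := by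
    refine cubeCoshDivSinhCube_le_of_abs_le (mul_ne_zero (by positivity) ht) ?_
    rw [abs_mul, abs_mul, abs_of_pos (by positivity : 0 < (β - α) / 2)]
    gcongr
    norm_num
    linarith
  refine ⟨fun t ht ↦ ?_, fun t ht ↦ ?_⟩
  · change 0 ≤ iteratedDeriv 3 (fun t ↦ log (expDiffQuotient α β t)) t
    rw [iteratedDeriv_three_log_expDiffQuotient hαβ (ne_of_gt ht)]
    have := hmono t (ne_of_gt ht)
    exact div_nonneg (by linarith) (pow_pos ht 3).le
  · change iteratedDeriv 3 (fun t ↦ log (expDiffQuotient α β t)) t ≤ 0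
    rw [iteratedDeriv_three_log_expDiffQuotient hαβ (ne_of_lt ht)]
    have := hmono t (ne_of_lt ht)
    exact div_nonpos_of_nonneg_of_nonpos (by linarith) (Odd.pow_nonpos (by decide) ht.le)
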